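/- arXiv:2205.04867 — 2 statements merged into one kernel-verified Lean document; each statement's English description precedes it below -/
import Mathlib

section
/- Let 0 < q < 1 and let p, r, g, y, f, h : ℝ → ℝ. Assume that for all x ≠ 0: (1/q)·(D_{q⁻¹}(D_q y))(x) + p(x)·(D_{q⁻¹}y)(x) + r(x)·y(x) = g(x), and (1/q)·(D_{q⁻¹}f)(x) = p(x)·f(x). Then for all x ≠ 0, the q-derivative at x of the function G(x) := f(x/q)·( y(x/q)·(D_{q⁻¹}h)(x) − h(x/q)·(D_{q⁻¹}y)(x) ) satisfies (D_q G)(x) + f(x)·h(x)·g(x) = f(x)·( (1/q)·(D_{q⁻¹}(D_q h))(x) + p(x)·(D_{q⁻¹}h)(x) + r(x)·h(x) )·y(x). -/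
/-!
The expression inside `D_q` is `(f · W)(x/q)`, where `W = y · D_q h - h · D_q y` is the
`q`-Wronskian. Since `D_q (u ∘ (·/q)) = q⁻¹ D_{q⁻¹} u`, the product rule for `D_{q⁻¹}` and the
equation `q⁻¹ D_{q⁻¹} f = p f` reduce the claim to the `q`-analogue of `(y h' - h y')' = y h'' - h y''`,
which holds because `W(s)` can be evaluated at either endpoint `s` or `q s` of the difference quotient.
-/

/-- The Jackson `q`-derivative `(D_q f)(x) = (f(x) - f(qx)) / ((1-q)x)`. -/
noncomputable def qDeriv (q : ℝ) (f : ℝ → ℝ) (x : ℝ) : ℝ :=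
  (f x - f (q * x)) / ((1 - q) * x)

/-- The `q⁻¹`-derivative `(D_{q⁻¹} f)(x) = q (f(x/q) - f(x)) / ((1-q)x)`. -/
noncomputable def qInvDeriv (q : ℝ) (f : ℝ → ℝ) (x : ℝ) : ℝ :=
  q * (f (x / q) - f x) / ((1 - q) * x)

section QCalculus

variable {q : ℝ}

theorem qInvDeriv_eq_qDeriv_div (hq : q ≠ 0) (u : ℝ → ℝ) (x : ℝ) :
    qInvDeriv q u x = qDeriv q u (x / q) := by
  unfold qInvDeriv qDeriv
  rw [mul_div_cancel₀ x hq, mul_div_assoc', div_div_eq_mul_div]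
  ring

theorem qDeriv_comp_div (hq : q ≠ 0) (u : ℝ → ℝ) (x : ℝ) :
    qDeriv q (fun t => u (t / q)) x = 1 / q * qInvDeriv q u x := by
  unfold qInvDeriv qDeriv
  simp only [mul_div_cancel_left₀ x hq]
  field_simp

theorem qInvDeriv_mul (u v : ℝ → ℝ) (x : ℝ) :
    qInvDeriv q (fun t => u t * v t) x = u x * qInvDeriv q v x + v (x / q) * qInvDeriv q u x := by
  unfold qInvDeriv
  ring

end QCalculus

noncomputable def qWronskian (q : ℝ) (y h : ℝ → ℝ) (x : ℝ) : ℝ :=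
  y x * qDeriv q h x - h x * qDeriv q y x

noncomputable def qLagrangeOp (q : ℝ) (p r u : ℝ → ℝ) (x : ℝ) : ℝ :=
  1 / q * qInvDeriv q (qDeriv q u) x + p x * qInvDeriv q u x + r x * u x

section QWronskian

variable {q : ℝ}

theorem qWronskian_eq_mul (y h : ℝ → ℝ) (s : ℝ) :
    qWronskian q y h s = y (q * s) * qDeriv q h s - h (q * s) * qDeriv q y s := by
  unfold qWronskian qDeriv
  ring

theorem qWronskian_div (hq : q ≠ 0) (y h : ℝ → ℝ) (x : ℝ) :
    qWronskian q y h (x / q) = y x * qInvDeriv q h x - h x * qInvDeriv q y x := by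
  rw [qWronskian_eq_mul, mul_div_cancel₀ x hq, qInvDeriv_eq_qDeriv_div hq,
    qInvDeriv_eq_qDeriv_div hq]

theorem qInvDeriv_qWronskian (hq : q ≠ 0) (y h : ℝ → ℝ) (x : ℝ) :
    qInvDeriv q (qWronskian q y h) x
      = y x * qInvDeriv q (qDeriv q h) x - h x * qInvDeriv q (qDeriv q y) x := by
  unfold qInvDeriv
  rw [qWronskian_div hq, qInvDeriv_eq_qDeriv_div hq, qInvDeriv_eq_qDeriv_div hq, qWronskian]
  ring

/-- The `q`-Lagrange identity: `f` is the integrating factor of `q⁻¹ D_{q⁻¹} D_q + p D_{q⁻¹} + r`. -/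
theorem qDeriv_integratingFactor_mul_qWronskian (hq : q ≠ 0) {p f : ℝ → ℝ} (r y h : ℝ → ℝ)
    {x : ℝ} (hf : 1 / q * qInvDeriv q f x = p x * f x) :
    qDeriv q (fun t => f (t / q) * qWronskian q y h (t / q)) x
      = f x * (y x * qLagrangeOp q p r h x - h x * qLagrangeOp q p r y x) := by
  rw [qDeriv_comp_div hq (fun t => f t * qWronskian q y h t), qInvDeriv_mul,
    qInvDeriv_qWronskian hq, qWronskian_div hq]
  unfold qLagrangeOp
  linear_combination (y x * qInvDeriv q h x - h x * qInvDeriv q y x) * hf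

end QWronskian

theorem lagrangian_NHSOqDE_general (q : ℝ) (hq : 0 < q)
    (p r g y f h : ℝ → ℝ)
    (hy : ∀ x : ℝ, x ≠ 0 →
      (1 / q) * qInvDeriv q (qDeriv q y) x + p x * qInvDeriv q y x + r x * y x = g x)
    (hf : ∀ x : ℝ, x ≠ 0 → (1 / q) * qInvDeriv q f x = p x * f x) :
    ∀ x : ℝ, x ≠ 0 →
      qDeriv q
        (fun t => f (t / q) * (y (t / q) * qInvDeriv q h t - h (t / q) * qInvDeriv q y t)) x
      + f x * h x * g x
      = f x * ((1 / q) * qInvDeriv q (qDeriv q h) x + p x * qInvDeriv q h x + r x * h x)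
          * y x := by
  intro x hx
  have hq0 : q ≠ 0 := hq.ne'
  have hG : (fun t => f (t / q) * (y (t / q) * qInvDeriv q h t - h (t / q) * qInvDeriv q y t))
      = fun t => f (t / q) * qWronskian q y h (t / q) := by
    funext t
    rw [qWronskian, qInvDeriv_eq_qDeriv_div hq0, qInvDeriv_eq_qDeriv_div hq0]
  rw [hG, qDeriv_integratingFactor_mul_qWronskian hq0 r y h (hf x hx), ← hy x hx]
  unfold qLagrangeOp
  ring

/-- Lagrangian method for nonhomogeneous second-order q-difference equations
(version with `D_{q⁻¹}` in the first-order term). -/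
theorem lagrangian_NHSOqDE (q : ℝ) (hq : 0 < q) (hq1 : q < 1)
    (p r g y f h : ℝ → ℝ)
    (hy : ∀ x : ℝ, x ≠ 0 →
      (1 / q) * qInvDeriv q (qDeriv q y) x + p x * qInvDeriv q y x + r x * y x = g x)
    (hf : ∀ x : ℝ, x ≠ 0 → (1 / q) * qInvDeriv q f x = p x * f x) :
    ∀ x : ℝ, x ≠ 0 →
      qDeriv q
        (fun t => f (t / q) * (y (t / q) * qInvDeriv q h t - h (t / q) * qInvDeriv q y t)) x
      + f x * h x * g x
      = f x * ((1 / q) * qInvDeriv q (qDeriv q h) x + p x * qInvDeriv q h x + r x * h x)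
          * y x :=
  lagrangian_NHSOqDE_general q hq p r g y f h hy hf
end

section
/- Let 0 < q < 1 and let ν be a real number with ν > 0. Then for all x > 0, the q-derivative at x of the function G(x) := −(1−q)·(x/q)^{1−ν}·J_{ν−1}^{(3)}(x/q; q²) equals x^{1−ν}·J_ν^{(3)}(x; q²). (Equivalently, ∫ x^{1−ν} J_ν^{(3)}(x;q²) d_q x = −(1−q)·(x/q)^{1−ν}·J_{ν−1}^{(3)}(x/q;q²).) -/
/-- The finite q-shifted factorial `(z; q)_n`. -/
noncomputable def qPoch (z q : ℝ) (n : ℕ) : ℝ :=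
  ∏ k ∈ Finset.range n, (1 - z * q ^ k)

/-- The infinite q-shifted factorial `(z; q)_∞`. -/
noncomputable def qPochInf (z q : ℝ) : ℝ :=
  ∏' k : ℕ, (1 - z * q ^ k)

/-- The third Jackson q-Bessel function `J_ν^{(3)}(x; q²)`. -/
noncomputable def J3 (q ν x : ℝ) : ℝ :=
  (qPochInf (q ^ (2 * ν + 2)) (q ^ 2) / qPochInf (q ^ 2) (q ^ 2)) *
    ∑' n : ℕ, ((-1 : ℝ) ^ n * q ^ (n * (n + 1)) * x ^ (2 * (n : ℝ) + ν)) /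
      (qPoch (q ^ 2) (q ^ 2) n *
        ∏ j ∈ Finset.range n, (1 - q ^ (2 * ν + 2 + 2 * (j : ℝ))))

open Real Filter Finset Topology

lemma qPoch_succ (z Q : ℝ) (n : ℕ) : qPoch z Q (n + 1) = qPoch z Q n * (1 - z * Q ^ n) :=
  prod_range_succ _ _

lemma qPoch_succ' (z Q : ℝ) (n : ℕ) : qPoch z Q (n + 1) = (1 - z) * qPoch (z * Q) Q n := by
  simp only [qPoch, prod_range_succ', pow_succ, pow_zero, mul_one, mul_assoc, mul_comm]

lemma one_sub_pow_le_qPoch {z Q : ℝ} (hz0 : 0 ≤ z) (hz1 : z ≤ 1) (hQ0 : 0 ≤ Q)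
    (hQ1 : Q ≤ 1) (n : ℕ) : (1 - z) ^ n ≤ qPoch z Q n := by
  simpa [qPoch] using prod_le_prod (s := range n) (f := fun _ => 1 - z)
    (fun _ _ => sub_nonneg.2 hz1)
    fun k _ => sub_le_sub_left (mul_le_of_le_one_right hz0 (pow_le_one₀ hQ0 hQ1)) 1

lemma multipliable_one_sub_mul_pow (z : ℝ) {Q : ℝ} (hQ : |Q| < 1) :
    Multipliable fun k : ℕ => 1 - z * Q ^ k := by
  have hsum : Summable fun k : ℕ => ‖-(z * Q ^ k)‖ := by
    simpa [abs_mul, abs_pow] using (summable_geometric_of_lt_one (abs_nonneg Q) hQ).mul_left |z|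
  simpa [sub_eq_add_neg] using multipliable_one_add_of_summable hsum

lemma qPochInf_eq_one_sub_mul (z : ℝ) {Q : ℝ} (hQ : |Q| < 1) :
    qPochInf z Q = (1 - z) * qPochInf (z * Q) Q := by
  have h := tprod_eq_zero_mul' (f := fun k : ℕ => 1 - z * Q ^ k)
    (by simpa [pow_succ, mul_assoc, mul_comm] using multipliable_one_sub_mul_pow (z * Q) hQ)
  simpa [qPochInf, pow_succ, mul_assoc, mul_comm] using h

lemma prod_one_sub_rpow_eq_qPoch {q : ℝ} (hq : 0 < q) (e : ℝ) (n : ℕ) :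
    ∏ j ∈ range n, (1 - q ^ (e + 2 * (j : ℝ))) = qPoch (q ^ e) (q ^ 2) n := by
  refine prod_congr rfl fun j _ => ?_
  rw [rpow_add hq, rpow_mul hq.le, rpow_two, rpow_natCast]

/-- The coefficient of `x^{2n+ν}` in the series of `J3 q ν x`, with `a = q^{2ν+2}`. -/
noncomputable def J3Coeff (q a : ℝ) (n : ℕ) : ℝ :=
  (-1) ^ n * q ^ (n * (n + 1)) / (qPoch (q ^ 2) (q ^ 2) n * qPoch a (q ^ 2) n)

lemma rpow_mul_J3 {q ν s x : ℝ} (hq : 0 < q) (hx : 0 < x) {k : ℕ} (hk : s + ν = k) :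
    x ^ s * J3 q ν x = qPochInf (q ^ (2 * ν + 2)) (q ^ 2) / qPochInf (q ^ 2) (q ^ 2) *
      ∑' n : ℕ, J3Coeff q (q ^ (2 * ν + 2)) n * x ^ (2 * n + k) := by
  rw [J3, mul_left_comm, ← tsum_mul_left]
  congr 1
  refine tsum_congr fun n => ?_
  have hpow : x ^ s * x ^ (2 * (n : ℝ) + ν) = x ^ (2 * n + k) := by
    rw [← rpow_add hx, ← rpow_natCast]
    push_cast
    congr 1
    linarith
  rw [prod_one_sub_rpow_eq_qPoch hq, J3Coeff, ← hpow]
  ring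

lemma summable_pow_mul_triangular_mul_pow {q : ℝ} (hq0 : 0 ≤ q) (hq1 : q < 1) (d : ℝ) :
    Summable fun n : ℕ => q ^ (n * (n + 1)) * d ^ n := by
  have hlim : Tendsto (fun n : ℕ => q ^ (n + 1) * d) atTop (𝓝 0) := by
    simpa using ((tendsto_pow_atTop_nhds_zero_of_lt_one hq0 hq1).comp
      (tendsto_add_atTop_nat 1)).mul_const d
  refine summable_geometric_two.of_norm_bounded_eventually_nat ?_
  filter_upwards [hlim.norm.eventually (gt_mem_nhds (by norm_num : ‖(0 : ℝ)‖ < 1 / 2))]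
    with n hn
  rw [pow_mul', ← mul_pow, norm_pow]
  exact pow_le_pow_left₀ (norm_nonneg _) hn.le n

lemma summable_J3Coeff_mul_pow {q a : ℝ} (hq0 : 0 < q) (hq1 : q < 1) (ha0 : 0 ≤ a) (ha1 : a < 1)
    (x : ℝ) (k : ℕ) : Summable fun n : ℕ => J3Coeff q a n * x ^ (2 * n + k) := by
  have hQ1 : q ^ 2 < 1 := pow_lt_one₀ hq0.le hq1 two_ne_zero
  set β := (1 - q ^ 2) * (1 - a)
  have hβ : 0 < β := mul_pos (by linarith) (by linarith)
  refine ((summable_pow_mul_triangular_mul_pow hq0.le hq1 (x ^ 2 / β)).mul_left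
    (|x| ^ k)).of_norm_bounded fun n => ?_
  have hden : β ^ n ≤ qPoch (q ^ 2) (q ^ 2) n * qPoch a (q ^ 2) n := by
    have h₁ := one_sub_pow_le_qPoch (by positivity) hQ1.le (by positivity) hQ1.le n
    have h₂ := one_sub_pow_le_qPoch ha0 ha1.le (by positivity) hQ1.le n
    rw [mul_pow]
    exact mul_le_mul h₁ h₂ (by bound) ((pow_nonneg (by linarith) n).trans h₁)
  have hβn : 0 < β ^ n := pow_pos hβ n
  simp only [J3Coeff, norm_mul, norm_div, norm_pow, norm_neg, norm_one, one_pow, one_mul,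
    norm_of_nonneg hq0.le, norm_of_nonneg (hβn.le.trans hden), Real.norm_eq_abs]
  calc q ^ (n * (n + 1)) / (qPoch (q ^ 2) (q ^ 2) n * qPoch a (q ^ 2) n) * |x| ^ (2 * n + k)
      ≤ q ^ (n * (n + 1)) / β ^ n * |x| ^ (2 * n + k) := by gcongr
    _ = |x| ^ k * (q ^ (n * (n + 1)) * (x ^ 2 / β) ^ n) := by
      rw [div_pow, pow_add, pow_mul |x|, sq_abs]
      ring

lemma J3Coeff_succ (q a : ℝ) (m : ℕ) :
    J3Coeff q a (m + 1) =
      J3Coeff q (a * q ^ 2) m * (-(q ^ 2) ^ (m + 1) / ((1 - (q ^ 2) ^ (m + 1)) * (1 - a))) := by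
  rw [J3Coeff, J3Coeff, qPoch_succ, qPoch_succ', div_mul_div_comm]
  congr 1 <;> ring

lemma one_sub_mul_J3Coeff_succ_mul_sub {q a : ℝ} (hq0 : 0 < q) (hq1 : q < 1) (ha : a ≠ 1)
    (x : ℝ) (m : ℕ) :
    (1 - a) * (J3Coeff q a (m + 1) * (x ^ (2 * (m + 1)) - (x / q) ^ (2 * (m + 1)))) =
      x * (J3Coeff q (a * q ^ 2) m * x ^ (2 * m + 1)) := by
  have hQ : 1 - (q ^ 2) ^ (m + 1) ≠ 0 :=
    sub_ne_zero.2 (pow_lt_one₀ (by positivity) (pow_lt_one₀ hq0.le hq1 two_ne_zero)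
      m.succ_ne_zero).ne'
  have ha' : 1 - a ≠ 0 := sub_ne_zero.2 ha.symm
  have hq : q ≠ 0 := hq0.ne'
  rw [J3Coeff_succ, div_pow]
  field_simp
  ring

lemma one_sub_mul_tsum_J3Coeff_sub {q a : ℝ} (hq0 : 0 < q) (hq1 : q < 1) (ha0 : 0 ≤ a)
    (ha1 : a < 1) (x : ℝ) :
    (1 - a) * (∑' n : ℕ, J3Coeff q a n * x ^ (2 * n) -
      ∑' n : ℕ, J3Coeff q a n * (x / q) ^ (2 * n)) =
      x * ∑' n : ℕ, J3Coeff q (a * q ^ 2) n * x ^ (2 * n + 1) := by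
  have hs (y : ℝ) : Summable fun n : ℕ => J3Coeff q a n * y ^ (2 * n) := by
    simpa using summable_J3Coeff_mul_pow hq0 hq1 ha0 ha1 y 0
  rw [← (hs x).tsum_sub (hs (x / q)), ((hs x).sub (hs (x / q))).tsum_eq_zero_add]
  simp only [mul_zero, pow_zero, sub_self, zero_add, ← mul_sub, ← tsum_mul_left]
  exact tsum_congr (one_sub_mul_J3Coeff_succ_mul_sub hq0 hq1 ha1.ne x)

lemma qDeriv_neg_one_sub_mul_comp_div {q : ℝ} (hq0 : q ≠ 0) (hq1 : q ≠ 1)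
    (g : ℝ → ℝ) (x : ℝ) :
    qDeriv q (fun t => -(1 - q) * g (t / q)) x = (g x - g (x / q)) / x := by
  rw [qDeriv, mul_div_cancel_left₀ x hq0, ← mul_div_mul_left _ x (sub_ne_zero.2 hq1.symm)]
  ring

/-- `∫ x^{1−ν} J_ν^{(3)}(x;q²) d_q x = −(1−q)(x/q)^{1−ν} J_{ν−1}^{(3)}(x/q;q²)`. -/
theorem qIntegral_J3_negnu (q ν : ℝ) (hq : 0 < q) (hq1 : q < 1) (hν : 0 < ν) :
    ∀ x : ℝ, 0 < x →
      qDeriv q (fun t => -(1 - q) * (t / q) ^ (1 - ν) * J3 q (ν - 1) (t / q)) x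
        = x ^ (1 - ν) * J3 q ν x := by
  intro x hx
  set a := q ^ (2 * ν)
  have ha0 : 0 < a := rpow_pos_of_pos hq _
  have ha1 : a < 1 := rpow_lt_one hq.le hq1 (by positivity)
  have hQ : |q ^ 2| < 1 := by
    rw [abs_of_pos (by positivity)]
    exact pow_lt_one₀ hq.le hq1 two_ne_zero
  have hexp : q ^ (2 * ν + 2) = a * q ^ 2 := by rw [rpow_add hq, rpow_two]
  have hexp' : q ^ (2 * (ν - 1) + 2) = a := by rw [show 2 * (ν - 1) + 2 = 2 * ν by ring]
  have hD := qDeriv_neg_one_sub_mul_comp_div hq.ne' hq1.ne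
    (fun y => y ^ (1 - ν) * J3 q (ν - 1) y) x
  beta_reduce at hD
  simp only [mul_assoc]
  rw [hD, rpow_mul_J3 hq hx (k := 0) (by ring),
    rpow_mul_J3 hq (div_pos hx hq) (k := 0) (by ring), rpow_mul_J3 hq hx (k := 1) (by ring),
    hexp, hexp', qPochInf_eq_one_sub_mul a hQ]
  simp only [add_zero]
  rw [div_eq_iff hx.ne']
  linear_combination qPochInf (a * q ^ 2) (q ^ 2) / qPochInf (q ^ 2) (q ^ 2) *
    one_sub_mul_tsum_J3Coeff_sub hq hq1 ha0.le ha1 x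
end
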